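/- arXiv:1111.5097 — 4 statements merged into one kernel-verified Lean document; each statement's English description precedes it below -/
import Mathlib

section
/- Let C > 0 with C < 1/2 and set ξ₁* = C/(2C+1). If ξ: I → ℝ is differentiable on an interval I ⊆ (0,∞) and satisfies ξ′(z) < (√6/z)·√(1+ξ(z))·(1 − (1/C)·ξ(z)/(1−2ξ(z))) wherever defined with 0 < ξ(z) < 1/2, and ξ(z₀) = ξ₀ ∈ (0, 1/2), then ξ(z) ≤ max{ξ₀, ξ₁*} for all z ≥ z₀ in I. -/
theorem stmt_6 (C : ℝ) (hC0 : 0 < C) (hC : C < 1/2)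
    (z₀ z₁ : ℝ) (hz₀ : 0 < z₀)
    (ξ : ℝ → ℝ)
    (hdiff : ∀ z ∈ Set.Ico z₀ z₁, DifferentiableAt ℝ ξ z)
    (hrange : ∀ z ∈ Set.Ico z₀ z₁, 0 < ξ z ∧ ξ z < 1/2)
    (hde : ∀ z ∈ Set.Ico z₀ z₁,
      deriv ξ z < (Real.sqrt 6 / z) * Real.sqrt (1 + ξ z) *
        (1 - (1 / C) * (ξ z / (1 - 2 * ξ z))))
    (hinit : ξ z₀ ∈ Set.Ioo (0:ℝ) (1/2)) :
    ∀ z ∈ Set.Ico z₀ z₁, ξ z ≤ max (ξ z₀) (C / (2 * C + 1)) := by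
  intro b hb
  by_contra hcon
  push_neg at hcon
  set M := max (ξ z₀) (C / (2 * C + 1)) with hM
  have hz₀b : z₀ ≤ b := hb.1
  have hsub : Set.Icc z₀ b ⊆ Set.Ico z₀ z₁ := fun z hz => ⟨hz.1, lt_of_le_of_lt hz.2 hb.2⟩
  have hcont : ContinuousOn ξ (Set.Icc z₀ b) := fun z hz =>
    ((hdiff z (hsub hz)).continuousAt).continuousWithinAt
  set S := Set.Icc z₀ b ∩ ξ ⁻¹' Set.Iic M with hS
  have hz₀S : z₀ ∈ S := ⟨⟨le_refl _, hz₀b⟩, show ξ z₀ ≤ M from le_max_left _ _⟩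
  have hSne : S.Nonempty := ⟨z₀, hz₀S⟩
  have hSbdd : BddAbove S := ⟨b, fun x hx => hx.1.2⟩
  have hSclosed : IsClosed S :=
    hcont.preimage_isClosed_of_isClosed isClosed_Icc isClosed_Iic
  set c := sSup S with hc
  have hcS : c ∈ S := hSclosed.csSup_mem hSne hSbdd
  have hξc : ξ c ≤ M := hcS.2
  have hcIcc : c ∈ Set.Icc z₀ b := hcS.1
  have hcb : c < b := by
    rcases lt_or_eq_of_le hcIcc.2 with h | h
    · exact h
    · exfalso; rw [h] at hξc; linarith
  -- On (c, b], ξ > M, so the derivative is negative there.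
  have hkey : ∀ z ∈ Set.Ioo c b, deriv ξ z < 0 := by
    intro z hz
    have hzIcc : z ∈ Set.Icc z₀ b := ⟨le_trans hcIcc.1 hz.1.le, hz.2.le⟩
    have hzIco : z ∈ Set.Ico z₀ z₁ := hsub hzIcc
    have hzS : z ∉ S := fun h => absurd (le_csSup hSbdd h) (not_le.mpr hz.1)
    have hgt : M < ξ z := by
      by_contra h
      exact hzS ⟨hzIcc, not_lt.mp h⟩
    have hx := hrange z hzIco
    set x := ξ z with hx'
    have h1 : C / (2 * C + 1) < x := lt_of_le_of_lt (le_max_right _ _) hgt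
    have h2 : 0 < 1 - 2 * x := by linarith [hx.2]
    have h3 : C < x * (2 * C + 1) := by
      rw [div_lt_iff₀ (by linarith)] at h1; linarith
    have h4 : C * (1 - 2 * x) < x := by nlinarith
    have h5 : 1 < (1 / C) * (x / (1 - 2 * x)) := by
      have e : (1 / C) * (x / (1 - 2 * x)) = x / (C * (1 - 2 * x)) := by
        field_simp
      rw [e, lt_div_iff₀ (mul_pos hC0 h2)]
      linarith
    have h6 : (1 : ℝ) - (1 / C) * (x / (1 - 2 * x)) < 0 := by linarith
    have hp : 0 ≤ Real.sqrt 6 / z * Real.sqrt (1 + x) := by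
      apply mul_nonneg
      · exact div_nonneg (Real.sqrt_nonneg _) (le_trans hz₀.le hzIco.1)
      · exact Real.sqrt_nonneg _
    have := hde z hzIco
    calc deriv ξ z < Real.sqrt 6 / z * Real.sqrt (1 + x) *
        (1 - (1 / C) * (x / (1 - 2 * x))) := this
      _ ≤ 0 := mul_nonpos_of_nonneg_of_nonpos hp h6.le
  have hanti : StrictAntiOn ξ (Set.Icc c b) := by
    apply strictAntiOn_of_deriv_neg (convex_Icc c b)
    · exact hcont.mono (fun z hz => ⟨le_trans hcIcc.1 hz.1, hz.2⟩)
    · intro z hz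
      rw [interior_Icc] at hz
      exact hkey z hz
  have : ξ b < ξ c := hanti ⟨le_refl c, hcb.le⟩ ⟨hcb.le, le_refl b⟩ hcb
  linarith
end

section
/- Suppose R: [z₀,∞) → (0,∞) is differentiable with R′ < 0, ξ: [z₀,∞) → ℝ is differentiable with ξ(z₀) = ξ₀ > 1/2, and ξ satisfies the differential equation ξ′(z) = √6·√(1+ξ(z))/(1+z) + ξ(z)·(R′(z)/R(z))·√3·√(1+ξ(z))/(√3 − √(2+2ξ(z))), with ξ(z) > 1/2 for all z ≥ z₀. Let ρ = √(3/2). Then with c₃ = min{ξ₀·R(z₀)^ρ, √6·√(1+ξ₀)}, for all z ≥ z₀: ξ(z)·R(z) ≥ c₃·(R(z)^{-(ρ-1)} + R(z)·ln((1+z)/(1+z₀))). -/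
private lemma aux_mul_nonpos_nonpos {a b : ℝ} (ha : a ≤ 0) (hb : b ≤ 0) : 0 ≤ a * b := by
  nlinarith

private lemma aux_bracket {x : ℝ} (hx : 1/2 < x) :
    Real.sqrt 3 - Real.sqrt (2 + 2*x) < 0 ∧
    Real.sqrt 3 * Real.sqrt (1+x) / (Real.sqrt 3 - Real.sqrt (2 + 2*x)) + Real.sqrt (3/2) ≤ 0 := by
  have h2 : Real.sqrt (2+2*x) = Real.sqrt 2 * Real.sqrt (1+x) := by
    rw [show (2+2*x) = 2*(1+x) by ring, Real.sqrt_mul (by norm_num)]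
  have h3 : Real.sqrt 3 = Real.sqrt 2 * Real.sqrt (3/2) := by
    rw [← Real.sqrt_mul (by norm_num)]; norm_num
  have hs : Real.sqrt (3/2) < Real.sqrt (1+x) := by
    apply Real.sqrt_lt_sqrt (by norm_num); linarith
  have h2pos : (0:ℝ) < Real.sqrt 2 := Real.sqrt_pos.2 (by norm_num)
  have hd : Real.sqrt 3 - Real.sqrt (2+2*x) < 0 := by
    rw [h2, h3]; nlinarith
  refine ⟨hd, ?_⟩
  have key : Real.sqrt 3 * Real.sqrt (1+x) / (Real.sqrt 3 - Real.sqrt (2 + 2*x))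
      ≤ -Real.sqrt (3/2) := by
    rw [div_le_iff_of_neg hd, h2]
    have h32 : Real.sqrt (3/2) * Real.sqrt 2 = Real.sqrt 3 := by
      rw [← Real.sqrt_mul (by positivity)]; norm_num
    have hsnn : (0:ℝ) ≤ Real.sqrt (1+x) := Real.sqrt_nonneg _
    have h32s : Real.sqrt (3/2) * Real.sqrt 2 * Real.sqrt (1+x)
        = Real.sqrt 3 * Real.sqrt (1+x) := by rw [h32]
    have h3nn : (0:ℝ) ≤ Real.sqrt 3 := Real.sqrt_nonneg _
    have h32nn : (0:ℝ) ≤ Real.sqrt (3/2) := Real.sqrt_nonneg _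
    nlinarith
  linarith

theorem stmt_8 (z₀ : ℝ) (R ξ : ℝ → ℝ)
    (hRpos : ∀ z, z₀ ≤ z → 0 < R z)
    (hRdiff : ∀ z, z₀ ≤ z → DifferentiableAt ℝ R z)
    (hR' : ∀ z, z₀ ≤ z → deriv R z < 0)
    (hξdiff : ∀ z, z₀ ≤ z → DifferentiableAt ℝ ξ z)
    (hξ0 : 1/2 < ξ z₀)
    (hξhalf : ∀ z, z₀ ≤ z → 1/2 < ξ z)
    (hODE : ∀ z, z₀ ≤ z →
      deriv ξ z = Real.sqrt 6 * Real.sqrt (1 + ξ z) / (1 + z)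
        + ξ z * (deriv R z / R z) *
          (Real.sqrt 3 * Real.sqrt (1 + ξ z) / (Real.sqrt 3 - Real.sqrt (2 + 2 * ξ z)))) :
    ∀ z, z₀ ≤ z →
      min (ξ z₀ * R z₀ ^ (Real.sqrt (3/2))) (Real.sqrt 6 * Real.sqrt (1 + ξ z₀)) *
        (R z ^ (-(Real.sqrt (3/2) - 1)) + R z * Real.log ((1 + z) / (1 + z₀)))
      ≤ ξ z * R z := by
  set ρ : ℝ := Real.sqrt (3/2) with hρdef
  have hρpos : 0 < ρ := Real.sqrt_pos.2 (by norm_num)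
  -- key derivative lower bounds, valid for all t ≥ z₀
  have hkey : ∀ t, z₀ ≤ t →
      Real.sqrt 6 * Real.sqrt (1 + ξ t) / (1 + t)
        ≤ deriv ξ t + ρ * (ξ t * (deriv R t / R t)) ∧
      Real.sqrt 6 * Real.sqrt (1 + ξ t) / (1 + t) ≤ deriv ξ t := by
    intro t ht
    have hξt := hξhalf t ht
    obtain ⟨hd, hbr⟩ := aux_bracket hξt
    have hRR : deriv R t / R t < 0 := div_neg_of_neg_of_pos (hR' t ht) (hRpos t ht)
    have hξRR : ξ t * (deriv R t / R t) ≤ 0 :=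
      mul_nonpos_of_nonneg_of_nonpos (by linarith) hRR.le
    have hBneg : Real.sqrt 3 * Real.sqrt (1 + ξ t) /
        (Real.sqrt 3 - Real.sqrt (2 + 2 * ξ t)) ≤ 0 := by linarith
    have h1 : 0 ≤ ξ t * (deriv R t / R t) *
        (Real.sqrt 3 * Real.sqrt (1 + ξ t) / (Real.sqrt 3 - Real.sqrt (2 + 2 * ξ t)) + ρ) :=
      aux_mul_nonpos_nonpos hξRR (by linarith)
    have h2 : 0 ≤ ξ t * (deriv R t / R t) *
        (Real.sqrt 3 * Real.sqrt (1 + ξ t) / (Real.sqrt 3 - Real.sqrt (2 + 2 * ξ t))) :=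
      aux_mul_nonpos_nonpos hξRR hBneg
    rw [hODE t ht]
    constructor
    · nlinarith [h1]
    · linarith
  intro z hz
  by_cases hz₀ : -1 < z₀
  · -- main case
    have h1z₀ : (0:ℝ) < 1 + z₀ := by linarith
    have hRz₀ := hRpos z₀ le_rfl
    set c : ℝ := min (ξ z₀ * R z₀ ^ ρ) (Real.sqrt 6 * Real.sqrt (1 + ξ z₀)) with hc
    have hcpos : 0 < c :=
      lt_min (mul_pos (by linarith) (Real.rpow_pos_of_pos hRz₀ ρ))
        (mul_pos (Real.sqrt_pos.2 (by norm_num)) (Real.sqrt_pos.2 (by linarith)))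
    -- ξ is monotone on [z₀, ∞)
    have hξmono : MonotoneOn ξ (Set.Ici z₀) := by
      apply monotoneOn_of_deriv_nonneg (convex_Ici z₀)
      · exact fun t ht => ((hξdiff t ht).continuousAt).continuousWithinAt
      · intro t ht
        rw [interior_Ici] at ht
        exact (hξdiff t ht.le).differentiableWithinAt
      · intro t ht
        rw [interior_Ici] at ht
        have ht2 : z₀ < t := ht
        have h1t : (0:ℝ) < 1 + t := by linarith
        have hpos : 0 ≤ Real.sqrt 6 * Real.sqrt (1 + ξ t) / (1 + t) :=
          div_nonneg (by positivity) h1t.le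
        linarith [(hkey t ht.le).2]
    -- the auxiliary function G and its derivative
    have hGderiv : ∀ t, z₀ < t → ∃ g,
        HasDerivAt (fun x => ξ x * R x ^ ρ
          - c * (1 + R x ^ ρ * (Real.log (1+x) - Real.log (1+z₀)))) g t ∧ 0 ≤ g := by
      intro t ht
      have ht' := ht.le
      have hRt := hRpos t ht'
      have h1t : (0:ℝ) < 1 + t := by linarith
      have hRd := (hRdiff t ht').hasDerivAt
      have hRp : HasDerivAt (fun x => R x ^ ρ) (deriv R t * ρ * R t ^ (ρ-1)) t :=
        hRd.rpow_const (Or.inl hRt.ne')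
      have hLd : HasDerivAt (fun x => Real.log (1+x) - Real.log (1+z₀)) (1/(1+t)) t := by
        have h0 : HasDerivAt (fun x : ℝ => 1 + x) 1 t := by
          simpa using (hasDerivAt_id t).const_add 1
        simpa using (h0.log h1t.ne').sub_const (Real.log (1 + z₀))
      have hξd := (hξdiff t ht').hasDerivAt
      refine ⟨_, ((hξd.mul hRp).sub (((hRp.mul hLd).const_add 1).const_mul c)), ?_⟩
      -- show the derivative is nonnegative
      have key1 := (hkey t ht').1
      have hRρ : R t ^ (ρ-1) = R t ^ ρ / R t := by
        rw [Real.rpow_sub hRt, Real.rpow_one]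
      rw [hRρ]
      have hRρpos : 0 < R t ^ ρ := Real.rpow_pos_of_pos hRt ρ
      have hRR : deriv R t / R t < 0 := div_neg_of_neg_of_pos (hR' t ht') hRt
      have hLnn : 0 ≤ Real.log (1+t) - Real.log (1+z₀) := by
        have := Real.log_le_log h1z₀ (by linarith : 1 + z₀ ≤ 1 + t)
        linarith
      have hcle : c ≤ Real.sqrt 6 * Real.sqrt (1 + ξ t) := by
        have hmono := hξmono (Set.self_mem_Ici) (Set.mem_Ici.2 ht') ht'
        have : Real.sqrt 6 * Real.sqrt (1 + ξ z₀) ≤ Real.sqrt 6 * Real.sqrt (1 + ξ t) :=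
          mul_le_mul_of_nonneg_left (Real.sqrt_le_sqrt (by linarith)) (Real.sqrt_nonneg 6)
        exact le_trans (min_le_right _ _) this
      have e1 : 0 ≤ R t ^ ρ * (deriv ξ t + ρ * (ξ t * (deriv R t / R t))
          - Real.sqrt 6 * Real.sqrt (1 + ξ t) / (1 + t)) :=
        mul_nonneg hRρpos.le (by linarith)
      have e2 : 0 ≤ c * ρ * (-(deriv R t / R t)) * (R t ^ ρ)
          * (Real.log (1+t) - Real.log (1+z₀)) :=
        mul_nonneg (mul_nonneg (mul_nonneg (mul_nonneg hcpos.le hρpos.le)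
          (by linarith)) hRρpos.le) hLnn
      have e3 : 0 ≤ (Real.sqrt 6 * Real.sqrt (1 + ξ t) - c) * (R t ^ ρ) / (1+t) :=
        div_nonneg (mul_nonneg (by linarith) hRρpos.le) h1t.le
      have hsum : deriv ξ t * R t ^ ρ + ξ t * (deriv R t * ρ * (R t ^ ρ / R t))
          - c * (deriv R t * ρ * (R t ^ ρ / R t) * (Real.log (1+t) - Real.log (1+z₀))
            + R t ^ ρ * (1/(1+t)))
          = R t ^ ρ * (deriv ξ t + ρ * (ξ t * (deriv R t / R t))
            - Real.sqrt 6 * Real.sqrt (1 + ξ t) / (1 + t))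
          + c * ρ * (-(deriv R t / R t)) * (R t ^ ρ)
            * (Real.log (1+t) - Real.log (1+z₀))
          + (Real.sqrt 6 * Real.sqrt (1 + ξ t) - c) * (R t ^ ρ) / (1+t) := by
        field_simp
        ring
      linarith [hsum ▸ add_nonneg (add_nonneg e1 e2) e3]
    -- G is monotone
    have hGmono : MonotoneOn (fun x => ξ x * R x ^ ρ
        - c * (1 + R x ^ ρ * (Real.log (1+x) - Real.log (1+z₀)))) (Set.Ici z₀) := by
      apply monotoneOn_of_deriv_nonneg (convex_Ici z₀)
      · intro t ht
        have ht' : z₀ ≤ t := ht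
        have hRt := hRpos t ht'
        have h1t : (0:ℝ) < 1 + t := by linarith
        have hc1 : ContinuousAt (fun x => R x ^ ρ) t :=
          ((hRdiff t ht').continuousAt).rpow_const (Or.inl hRt.ne')
        have hc2 : ContinuousAt (fun x => Real.log (1+x) - Real.log (1+z₀)) t := by
          exact ((continuousAt_const.add continuousAt_id).log h1t.ne').sub continuousAt_const
        exact ((((hξdiff t ht').continuousAt).mul hc1).sub
          (continuousAt_const.mul (continuousAt_const.add (hc1.mul hc2)))).continuousWithinAt
      · intro t ht
        rw [interior_Ici] at ht
        obtain ⟨g, hg, _⟩ := hGderiv t ht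
        exact hg.differentiableAt.differentiableWithinAt
      · intro t ht
        rw [interior_Ici] at ht
        obtain ⟨g, hg, hg0⟩ := hGderiv t ht
        rw [hg.deriv]; exact hg0
    have hGz := hGmono (Set.self_mem_Ici) (Set.mem_Ici.2 hz) hz
    simp only [sub_self, mul_zero, add_zero] at hGz
    have hGz0 : c * (1 + R z ^ ρ * (Real.log (1+z) - Real.log (1+z₀))) ≤ ξ z * R z ^ ρ := by
      have hcle := min_le_left (ξ z₀ * R z₀ ^ ρ) (Real.sqrt 6 * Real.sqrt (1 + ξ z₀))
      rw [← hc] at hcle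
      linarith
    -- convert to the stated form
    have hRz := hRpos z hz
    have h1z : (0:ℝ) < 1 + z := by linarith
    have hlog : Real.log ((1+z)/(1+z₀)) = Real.log (1+z) - Real.log (1+z₀) :=
      Real.log_div h1z.ne' h1z₀.ne'
    have hP : 0 < R z ^ (1-ρ) := Real.rpow_pos_of_pos hRz _
    have hRR1 : R z ^ ρ * R z ^ (1-ρ) = R z := by
      rw [← Real.rpow_add hRz, show ρ + (1-ρ) = 1 by ring, Real.rpow_one]
    have hexp : -(ρ-1) = 1-ρ := by ring
    have hkey2 : (1 + R z ^ ρ * (Real.log (1+z) - Real.log (1+z₀))) * R z ^ (1-ρ)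
        = R z ^ (1-ρ) + R z * (Real.log (1+z) - Real.log (1+z₀)) := by
      rw [add_mul, one_mul, show R z ^ ρ * (Real.log (1+z) - Real.log (1+z₀)) * R z ^ (1-ρ)
        = (R z ^ ρ * R z ^ (1-ρ)) * (Real.log (1+z) - Real.log (1+z₀)) by ring, hRR1]
    calc c * (R z ^ (-(ρ-1)) + R z * Real.log ((1+z)/(1+z₀)))
        = c * (1 + R z ^ ρ * (Real.log (1+z) - Real.log (1+z₀))) * R z ^ (1-ρ) := by
          rw [hlog, hexp, ← hkey2, mul_assoc]
      _ ≤ ξ z * R z ^ ρ * R z ^ (1-ρ) := mul_le_mul_of_nonneg_right hGz0 hP.le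
      _ = ξ z * R z := by rw [mul_assoc, hRR1]
  · -- degenerate case z₀ ≤ -1 : the hypotheses are contradictory
    exfalso
    push_neg at hz₀
    have h0 : z₀ ≤ 0 := by linarith
    set w : ℝ := -1 + Real.exp (-(ξ 0) - 3) with hw
    have hexppos : 0 < Real.exp (-(ξ 0) - 3) := Real.exp_pos _
    have hexplt : Real.exp (-(ξ 0) - 3) < 1 := by
      rw [Real.exp_lt_one_iff]
      linarith [hξhalf 0 h0]
    have hw1 : -1 < w := by simp [hw]; linarith
    have hw0 : w < 0 := by simp only [hw]; linarith
    have hwz₀ : z₀ ≤ w := by linarith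
    -- h(t) = ξ t - 3 log(1+t) is monotone on [w,0]
    have hmono : MonotoneOn (fun t => ξ t - 3 * Real.log (1+t)) (Set.Icc w 0) := by
      apply monotoneOn_of_deriv_nonneg (convex_Icc w 0)
      · intro t ht
        have h1t : (0:ℝ) < 1 + t := by linarith [ht.1]
        exact (((hξdiff t (by linarith [ht.1])).continuousAt).sub
          (continuousAt_const.mul
            ((continuousAt_const.add continuousAt_id).log h1t.ne'))).continuousWithinAt
      · intro t ht
        rw [interior_Icc] at ht
        have h1t : (0:ℝ) < 1 + t := by linarith [ht.1]
        have h0d : HasDerivAt (fun x : ℝ => 1 + x) 1 t := by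
          simpa using (hasDerivAt_id t).const_add 1
        exact (((hξdiff t (by linarith [ht.1])).sub
          ((h0d.log h1t.ne').const_mul 3).differentiableAt)).differentiableWithinAt
      · intro t ht
        rw [interior_Icc] at ht
        have htz₀ : z₀ ≤ t := by linarith [ht.1]
        have h1t : (0:ℝ) < 1 + t := by linarith [ht.1]
        have h0d : HasDerivAt (fun x : ℝ => 1 + x) 1 t := by
          simpa using (hasDerivAt_id t).const_add 1
        have hld : HasDerivAt (fun x => 3 * Real.log (1+x)) (3 * (1/(1+t))) t := by
          simpa using (h0d.log h1t.ne').const_mul 3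
        have hder : HasDerivAt (fun x => ξ x - 3 * Real.log (1+x))
            (deriv ξ t - 3 * (1/(1+t))) t := ((hξdiff t htz₀).hasDerivAt).sub hld
        rw [hder.deriv]
        -- deriv ξ t ≥ √6 √(1+ξ t)/(1+t) ≥ 3/(1+t)
        have hk := (hkey t htz₀).2
        have h63 : (3:ℝ) ≤ Real.sqrt 6 * Real.sqrt (1 + ξ t) := by
          have h1 : Real.sqrt 6 * Real.sqrt (3/2) = 3 := by
            rw [← Real.sqrt_mul (by norm_num), show (6:ℝ)*(3/2) = 9 by norm_num,
              show (9:ℝ) = 3^2 by norm_num, Real.sqrt_sq (by norm_num)]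
          have h2 : Real.sqrt (3/2) ≤ Real.sqrt (1 + ξ t) :=
            Real.sqrt_le_sqrt (by linarith [hξhalf t htz₀])
          nlinarith [Real.sqrt_nonneg (6:ℝ)]
        have : 3 / (1+t) ≤ Real.sqrt 6 * Real.sqrt (1 + ξ t) / (1+t) := by
          exact div_le_div_of_nonneg_right h63 h1t.le
        have h33 : 3 * (1/(1+t)) = 3/(1+t) := by ring
        linarith
    have hwmem : w ∈ Set.Icc w 0 := ⟨le_refl w, hw0.le⟩
    have h0mem : (0:ℝ) ∈ Set.Icc w 0 := ⟨hw0.le, le_refl 0⟩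
    have := hmono hwmem h0mem hw0.le
    simp only at this
    have hlogw : Real.log (1 + w) = -(ξ 0) - 3 := by
      rw [hw, show (1 + (-1 + Real.exp (-(ξ 0) - 3))) = Real.exp (-(ξ 0) - 3) by ring,
        Real.log_exp]
    rw [hlogw] at this
    simp only [add_zero, Real.log_one] at this
    have hξw := hξhalf w hwz₀
    have hξ00 := hξhalf 0 h0
    linarith
end

section
/- For 0 ≤ Ω < 1, let I(y) = 1/√(Ω+(1−Ω)y³) and let q = q(Ω) > 1 be the unique solution of q·I(q) = ∫₁^q I(y) dy. Then q(Ω) is strictly increasing as a function of Ω on [0,1), and in particular q(Ω) ≥ 9/4 for all Ω ∈ [0,1). -/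
/-!
Multiplying the defining equation by `√E(q)`, where `E(Ω, y) = Ω + (1 - Ω) y³`, it reads
`D(Ω, q) = 1` for `D(Ω, p) = ∫₁^p (√(E(Ω, p) / E(Ω, y)) - 1) dy`. The integrand is nonnegative
and grows with `p`, so `D` is nondecreasing in `p`; and
`E(Ω₁, p) E(Ω₂, y) - E(Ω₂, p) E(Ω₁, y) = (Ω₂ - Ω₁)(p³ - y³)`, so `D` is strictly decreasing
in `Ω`. Hence a larger `Ω` forces a larger root. At `Ω = 0` the integral is elementary:
`1 / √q = 2 - 2 / √q`, so `q(0) = 9/4`.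
-/

open Real intervalIntegral Set

/-- `(H / H₀)²` at `y = 1 + z` in a flat universe with vacuum energy density `Ω`. -/
noncomputable def hubbleSq (Ω y : ℝ) : ℝ := Ω + (1 - Ω) * y ^ 3

section hubbleSq

variable {Ω Ω₁ Ω₂ p y : ℝ}

lemma one_le_hubbleSq (hΩ : Ω ≤ 1) (hy : 1 ≤ y) : 1 ≤ hubbleSq Ω y := by
  have : 1 ≤ y ^ 3 := one_le_pow₀ hy
  unfold hubbleSq; nlinarith

lemma hubbleSq_pos (hΩ : Ω ≤ 1) (hy : 1 ≤ y) : 0 < hubbleSq Ω y :=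
  one_pos.trans_le (one_le_hubbleSq hΩ hy)

lemma hubbleSq_le_hubbleSq (hΩ : Ω ≤ 1) (hy : 0 ≤ y) (hyp : y ≤ p) :
    hubbleSq Ω y ≤ hubbleSq Ω p := by
  have : y ^ 3 ≤ p ^ 3 := pow_le_pow_left₀ hy hyp 3
  unfold hubbleSq; nlinarith

lemma hubbleSq_mul_sub_mul (Ω₁ Ω₂ p y : ℝ) :
    hubbleSq Ω₁ p * hubbleSq Ω₂ y - hubbleSq Ω₂ p * hubbleSq Ω₁ y =
      (Ω₂ - Ω₁) * (p ^ 3 - y ^ 3) := by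
  unfold hubbleSq; ring

lemma hubbleSq_div_le_hubbleSq_div (h12 : Ω₁ ≤ Ω₂) (hΩ₂ : Ω₂ ≤ 1) (hy : 1 ≤ y) (hyp : y ≤ p) :
    hubbleSq Ω₂ p / hubbleSq Ω₂ y ≤ hubbleSq Ω₁ p / hubbleSq Ω₁ y := by
  rw [div_le_div_iff₀ (hubbleSq_pos hΩ₂ hy) (hubbleSq_pos (h12.trans hΩ₂) hy), ← sub_nonneg,
    hubbleSq_mul_sub_mul]
  have : y ^ 3 ≤ p ^ 3 := pow_le_pow_left₀ (by linarith) hyp 3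
  exact mul_nonneg (by linarith) (by linarith)

lemma hubbleSq_div_lt_hubbleSq_div (h12 : Ω₁ < Ω₂) (hΩ₂ : Ω₂ ≤ 1) (hy : 1 ≤ y) (hyp : y < p) :
    hubbleSq Ω₂ p / hubbleSq Ω₂ y < hubbleSq Ω₁ p / hubbleSq Ω₁ y := by
  rw [div_lt_div_iff₀ (hubbleSq_pos hΩ₂ hy) (hubbleSq_pos (h12.le.trans hΩ₂) hy), ← sub_pos,
    hubbleSq_mul_sub_mul]
  have : y ^ 3 < p ^ 3 := pow_lt_pow_left₀ hyp (by linarith) three_ne_zero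
  exact mul_pos (by linarith) (by linarith)

lemma continuousOn_sqrt_div_hubbleSq (hΩ : Ω ≤ 1) (c : ℝ) :
    ContinuousOn (fun y => √(c / hubbleSq Ω y)) (Ici 1) := by
  refine (continuousOn_const.div (by unfold hubbleSq; fun_prop) ?_).sqrt
  exact fun y hy => (hubbleSq_pos hΩ hy).ne'

lemma intervalIntegrable_sqrt_div_hubbleSq_sub_one (hΩ : Ω ≤ 1) (c : ℝ) {a b : ℝ}
    (ha : 1 ≤ a) (hb : 1 ≤ b) :
    IntervalIntegrable (fun y => √(c / hubbleSq Ω y) - 1) MeasureTheory.volume a b := by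
  refine ContinuousOn.intervalIntegrable ?_
  exact ((continuousOn_sqrt_div_hubbleSq hΩ c).sub continuousOn_const).mono
    fun y hy => le_min ha hb |>.trans hy.1

end hubbleSq

noncomputable def defect (Ω p : ℝ) : ℝ :=
  ∫ y in (1:ℝ)..p, (√(hubbleSq Ω p / hubbleSq Ω y) - 1)

section defect

variable {Ω Ω₁ Ω₂ p p₁ p₂ : ℝ}

lemma defect_le_defect (hΩ : Ω ≤ 1) (h1 : 1 ≤ p₁) (h12 : p₁ ≤ p₂) :
    defect Ω p₁ ≤ defect Ω p₂ := by
  have h2 : 1 ≤ p₂ := h1.trans h12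
  unfold defect
  rw [← integral_add_adjacent_intervals
    (intervalIntegrable_sqrt_div_hubbleSq_sub_one hΩ _ le_rfl h1)
    (intervalIntegrable_sqrt_div_hubbleSq_sub_one hΩ _ h1 h2)]
  have head : ∫ y in (1:ℝ)..p₁, (√(hubbleSq Ω p₁ / hubbleSq Ω y) - 1) ≤
      ∫ y in (1:ℝ)..p₁, (√(hubbleSq Ω p₂ / hubbleSq Ω y) - 1) := by
    refine integral_mono_on h1 (intervalIntegrable_sqrt_div_hubbleSq_sub_one hΩ _ le_rfl h1)
      (intervalIntegrable_sqrt_div_hubbleSq_sub_one hΩ _ le_rfl h1) fun y hy => ?_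
    gcongr
    · exact (hubbleSq_pos hΩ hy.1).le
    · exact hubbleSq_le_hubbleSq hΩ (by linarith) h12
  have tail : 0 ≤ ∫ y in p₁..p₂, (√(hubbleSq Ω p₂ / hubbleSq Ω y) - 1) := by
    refine integral_nonneg h12 fun y hy => ?_
    rw [sub_nonneg, one_le_sqrt, one_le_div (hubbleSq_pos hΩ (h1.trans hy.1))]
    exact hubbleSq_le_hubbleSq hΩ (by linarith [hy.1]) hy.2
  linarith

lemma defect_lt_defect (h12 : Ω₁ < Ω₂) (hΩ₂ : Ω₂ ≤ 1) (hp : 1 < p) :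
    defect Ω₂ p < defect Ω₁ p := by
  have hΩ₁ : Ω₁ ≤ 1 := h12.le.trans hΩ₂
  refine integral_lt_integral_of_continuousOn_of_le_of_exists_lt hp
    (((continuousOn_sqrt_div_hubbleSq hΩ₂ _).sub continuousOn_const).mono Icc_subset_Ici_self)
    (((continuousOn_sqrt_div_hubbleSq hΩ₁ _).sub continuousOn_const).mono Icc_subset_Ici_self)
    (fun y hy => ?_) ⟨1, left_mem_Icc.2 hp.le, ?_⟩
  · exact sub_le_sub_right (sqrt_le_sqrt (hubbleSq_div_le_hubbleSq_div h12.le hΩ₂ hy.1.le hy.2)) 1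
  · refine sub_lt_sub_right (sqrt_lt_sqrt ?_ (hubbleSq_div_lt_hubbleSq_div h12 hΩ₂ le_rfl hp)) 1
    exact div_nonneg (hubbleSq_pos hΩ₂ hp.le).le (hubbleSq_pos hΩ₂ le_rfl).le

lemma defect_eq_one (hΩ : Ω ≤ 1) (hp : 1 ≤ p)
    (h : p * (1 / √(hubbleSq Ω p)) = ∫ y in (1:ℝ)..p, 1 / √(hubbleSq Ω y)) :
    defect Ω p = 1 := by
  have hE := hubbleSq_pos hΩ hp
  have hI : IntervalIntegrable (fun y => 1 / √(hubbleSq Ω y)) MeasureTheory.volume 1 p := by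
    simpa only [sqrt_div zero_le_one, sqrt_one, sub_add_cancel] using
      (intervalIntegrable_sqrt_div_hubbleSq_sub_one hΩ 1 le_rfl hp).add
        (intervalIntegrable_const (c := (1:ℝ)))
  unfold defect
  simp_rw [sqrt_div hE.le, div_eq_mul_one_div (√(hubbleSq Ω p))]
  rw [integral_sub (hI.const_mul _) intervalIntegrable_const, integral_const_mul, ← h]
  field_simp
  rw [integral_one]
  ring

end defect

lemma integral_one_div_sqrt_pow_three {a b : ℝ} (ha : 0 < a) (hab : a ≤ b) :
    ∫ y in a..b, 1 / √(y ^ 3) = 2 / √a - 2 / √b := by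
  have hpos : ∀ y ∈ uIcc a b, 0 < y := fun y hy => ha.trans_le (by simpa [hab] using hy.1)
  have hderiv : ∀ y ∈ uIcc a b, HasDerivAt (fun t => -2 / √t) (1 / √(y ^ 3)) y := by
    intro y hy
    have hy := hpos y hy
    refine ((hasDerivAt_const y (-2 : ℝ)).div (hasDerivAt_sqrt hy.ne')
      (sqrt_pos.2 hy).ne').congr_deriv ?_
    rw [show y ^ 3 = y * y ^ 2 by ring, sqrt_mul hy.le, sqrt_sq hy.le, sq_sqrt hy.le]
    field_simp
    ring
  have hcont : ContinuousOn (fun y => 1 / √(y ^ 3)) (uIcc a b) :=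
    continuousOn_const.div (by fun_prop) fun y hy => (sqrt_pos.2 (pow_pos (hpos y hy) 3)).ne'
  rw [integral_eq_sub_of_hasDerivAt hderiv hcont.intervalIntegrable]
  ring

lemma eq_nine_div_four_of_eq_integral {Q : ℝ} (hQ : 1 < Q)
    (h : Q * (1 / √(hubbleSq 0 Q)) = ∫ y in (1:ℝ)..Q, 1 / √(hubbleSq 0 y)) : Q = 9 / 4 := by
  simp only [hubbleSq, sub_zero, zero_add, one_mul] at h
  rw [integral_one_div_sqrt_pow_three one_pos hQ.le, sqrt_one] at h
  obtain ⟨s, hs, rfl⟩ : ∃ s, 1 < s ∧ Q = s ^ 2 :=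
    ⟨√Q, (lt_sqrt zero_le_one).2 (by simpa using hQ), (sq_sqrt (by linarith)).symm⟩
  rw [show (s ^ 2) ^ 3 = (s ^ 3) ^ 2 by ring, sqrt_sq (by positivity), sqrt_sq (by positivity)] at h
  field_simp at h
  nlinarith

theorem stmt_12 (q : ℝ → ℝ)
    (hq : ∀ Ω ∈ Set.Ico (0:ℝ) 1, 1 < q Ω ∧
      q Ω * (1 / Real.sqrt (Ω + (1 - Ω) * (q Ω) ^ 3)) =
        ∫ y in (1:ℝ)..(q Ω), 1 / Real.sqrt (Ω + (1 - Ω) * y ^ 3)) :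
    StrictMonoOn q (Set.Ico (0:ℝ) 1) ∧ ∀ Ω ∈ Set.Ico (0:ℝ) 1, 9/4 ≤ q Ω := by
  have hdefect : ∀ Ω ∈ Ico (0:ℝ) 1, defect Ω (q Ω) = 1 := fun Ω hΩ =>
    defect_eq_one hΩ.2.le (hq Ω hΩ).1.le (hq Ω hΩ).2
  have hmono : StrictMonoOn q (Ico 0 1) := by
    intro Ω₁ h₁ Ω₂ h₂ h12
    by_contra! hle
    have := calc (1:ℝ) = defect Ω₂ (q Ω₂) := (hdefect Ω₂ h₂).symm
      _ ≤ defect Ω₂ (q Ω₁) := defect_le_defect h₂.2.le (hq Ω₂ h₂).1.le hle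
      _ < defect Ω₁ (q Ω₁) := defect_lt_defect h12 h₂.2.le (hq Ω₁ h₁).1
      _ = 1 := hdefect Ω₁ h₁
    exact lt_irrefl _ this
  have h0 : (0:ℝ) ∈ Ico 0 1 := ⟨le_rfl, one_pos⟩
  have hq0 : q 0 = 9 / 4 := eq_nine_div_four_of_eq_integral (hq 0 h0).1 (hq 0 h0).2
  exact ⟨hmono, fun Ω hΩ => hq0 ▸ hmono.monotoneOn h0 hΩ hΩ.1⟩
end

section
/- For 0 ≤ Ω < 1, let I(y) = 1/√(Ω+(1−Ω)y³) and q = 1 + z_Λ the unique solution in (1,∞) of q·I(q) = ∫₁^q I(y) dy. Then √q ≤ k₂/√(1−Ω), where 1/k₂ = ∫₁^{9/4} dy/√(1+y³); consequently q ≤ k₂²/(1−Ω). -/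
/-!
Write `I y = 1 / √(Ω + (1 - Ω) y³)` and `J y = 1 / √(1 + y³)`, so that `J ≤ I` on `[1, ∞)`.
Dropping `Ω` in `I q` gives `q I(q) ≤ 1 / (√(1 - Ω) √q)`, so the defining equation of `q` yields
`∫₁^q J ≤ ∫₁^q I = q I(q) ≤ 1 / (√(1 - Ω) √q)`. If `q ≥ 9/4` the left side is at least `1 / k₂`.
If `q < 9/4`, then `√q < 3/2 ≤ k₂` because `J y ≤ y^(-3/2)` and `∫₁^{9/4} y^(-3/2) = 2/3`.
Either way `√(1 - Ω) √q ≤ k₂`, which is both claims.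
-/

open Real Set MeasureTheory intervalIntegral

lemma one_le_add_one_sub_mul_pow_three {Ω y : ℝ} (hΩ : Ω ≤ 1) (hy : 1 ≤ y) :
    1 ≤ Ω + (1 - Ω) * y ^ 3 := by
  nlinarith [mul_nonneg (sub_nonneg.2 hΩ) (sub_nonneg.2 (one_le_pow₀ (n := 3) hy))]

lemma intervalIntegrable_one_div_sqrt {f : ℝ → ℝ} {a b : ℝ} (hf : Continuous f)
    (hpos : ∀ y ∈ uIcc a b, 0 < f y) :
    IntervalIntegrable (fun y => 1 / √(f y)) volume a b :=
  (continuousOn_const.div (continuous_sqrt.comp hf).continuousOn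
    fun y hy => (sqrt_pos.2 (hpos y hy)).ne').intervalIntegrable

lemma intervalIntegrable_one_div_sqrt_one_add_pow_three {a b : ℝ} (ha : 0 ≤ a) (hb : 0 ≤ b) :
    IntervalIntegrable (fun y : ℝ => 1 / √(1 + y ^ 3)) volume a b :=
  intervalIntegrable_one_div_sqrt (by fun_prop) fun y hy => by
    have : 0 ≤ y := (le_min ha hb).trans hy.1
    positivity

lemma one_div_sqrt_one_add_pow_three_le {Ω y : ℝ} (hΩ0 : 0 ≤ Ω) (hΩ1 : Ω ≤ 1) (hy : 1 ≤ y) :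
    1 / √(1 + y ^ 3) ≤ 1 / √(Ω + (1 - Ω) * y ^ 3) := by
  have := one_le_add_one_sub_mul_pow_three hΩ1 hy
  gcongr
  nlinarith [mul_nonneg hΩ0 (pow_nonneg (zero_le_one.trans hy) 3)]

lemma mul_one_div_sqrt_le {Ω q : ℝ} (hΩ0 : 0 ≤ Ω) (hΩ1 : Ω < 1) (hq : 0 < q) :
    q * (1 / √(Ω + (1 - Ω) * q ^ 3)) ≤ 1 / (√(1 - Ω) * √q) := by
  have hΩ : 0 < 1 - Ω := by linarith
  have hcube : √((1 - Ω) * q ^ 3) = √(1 - Ω) * √q * q := by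
    rw [sqrt_mul hΩ.le, show q ^ 3 = q ^ 2 * q by ring, sqrt_mul (sq_nonneg q), sqrt_sq hq.le]
    ring
  calc q * (1 / √(Ω + (1 - Ω) * q ^ 3)) ≤ q * (1 / √((1 - Ω) * q ^ 3)) := by
        gcongr
        linarith
    _ = 1 / (√(1 - Ω) * √q) := by
        rw [hcube]
        field_simp

lemma integral_one_div_sqrt_one_add_pow_three_le_of_root {Ω q : ℝ} (hΩ0 : 0 ≤ Ω) (hΩ1 : Ω < 1)
    (hq : 1 ≤ q)
    (hroot : q * (1 / √(Ω + (1 - Ω) * q ^ 3)) = ∫ y in (1:ℝ)..q, 1 / √(Ω + (1 - Ω) * y ^ 3)) :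
    ∫ y in (1:ℝ)..q, 1 / √(1 + y ^ 3) ≤ 1 / (√(1 - Ω) * √q) := by
  have hI : IntervalIntegrable (fun y => 1 / √(Ω + (1 - Ω) * y ^ 3)) volume 1 q :=
    intervalIntegrable_one_div_sqrt (by fun_prop) fun y hy => by
      rw [uIcc_of_le hq] at hy
      linarith [one_le_add_one_sub_mul_pow_three hΩ1.le hy.1]
  calc ∫ y in (1:ℝ)..q, 1 / √(1 + y ^ 3)
      ≤ ∫ y in (1:ℝ)..q, 1 / √(Ω + (1 - Ω) * y ^ 3) :=
        integral_mono_on hq (intervalIntegrable_one_div_sqrt_one_add_pow_three zero_le_one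
          (zero_le_one.trans hq)) hI fun y hy =>
          one_div_sqrt_one_add_pow_three_le hΩ0 hΩ1.le hy.1
    _ = q * (1 / √(Ω + (1 - Ω) * q ^ 3)) := hroot.symm
    _ ≤ 1 / (√(1 - Ω) * √q) := mul_one_div_sqrt_le hΩ0 hΩ1 (by linarith)

lemma rpow_neg_three_halves_eq_one_div_sqrt {y : ℝ} (hy : 0 ≤ y) :
    y ^ (-(3 / 2) : ℝ) = 1 / √(y ^ 3) := by
  rw [sqrt_eq_rpow, ← rpow_natCast, ← rpow_mul hy, rpow_neg hy]
  norm_num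

lemma integral_rpow_neg_three_halves {a b : ℝ} (ha : 0 < a) (hb : 0 < b) :
    ∫ y in a..b, y ^ (-(3 / 2) : ℝ) = 2 / √a - 2 / √b := by
  have h0 : (0 : ℝ) ∉ uIcc a b := fun h => by
    rcases le_total a b with hab | hab
    · rw [uIcc_of_le hab] at h; linarith [h.1]
    · rw [uIcc_of_ge hab] at h; linarith [h.1]
  rw [integral_rpow (Or.inr ⟨by norm_num, h0⟩), sqrt_eq_rpow, sqrt_eq_rpow,
    show (-(3 / 2) : ℝ) + 1 = -(1 / 2) by norm_num, rpow_neg hb.le, rpow_neg ha.le]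
  field_simp
  ring

lemma integral_one_div_sqrt_one_add_pow_three_le_two_thirds :
    ∫ y in (1:ℝ)..(9/4), 1 / √(1 + y ^ 3) ≤ 2 / 3 := by
  have hrpow : IntervalIntegrable (fun y : ℝ => y ^ (-(3 / 2) : ℝ)) volume 1 (9/4) :=
    (continuousOn_id.rpow_const fun y hy => by
      rw [uIcc_of_le (by norm_num)] at hy
      exact Or.inl (by simp only [id]; linarith [hy.1])).intervalIntegrable
  calc ∫ y in (1:ℝ)..(9/4), 1 / √(1 + y ^ 3)
      ≤ ∫ y in (1:ℝ)..(9/4), y ^ (-(3 / 2) : ℝ) :=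
        integral_mono_on (by norm_num)
          (intervalIntegrable_one_div_sqrt_one_add_pow_three zero_le_one (by norm_num)) hrpow
          fun y hy => by
            have hy0 : 0 < y := by linarith [hy.1]
            rw [rpow_neg_three_halves_eq_one_div_sqrt hy0.le]
            gcongr
            linarith
    _ = 2 / 3 := by
      rw [integral_rpow_neg_three_halves one_pos (by norm_num), sqrt_one,
        show (9/4 : ℝ) = (3/2) ^ 2 by norm_num, sqrt_sq (by norm_num)]
      norm_num

lemma integral_one_div_sqrt_one_add_pow_three_pos {b : ℝ} (hb : 1 < b) :
    0 < ∫ y in (1:ℝ)..b, 1 / √(1 + y ^ 3) :=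
  intervalIntegral_pos_of_pos_on
    (intervalIntegrable_one_div_sqrt_one_add_pow_three zero_le_one (by linarith))
    (fun y hy => by
      have : 0 < y := by linarith [hy.1]
      positivity) hb

theorem stmt_13 (Ω q : ℝ) (hΩ0 : 0 ≤ Ω) (hΩ1 : Ω < 1) (hq1 : 1 < q)
    (hroot : q * (1 / Real.sqrt (Ω + (1 - Ω) * q ^ 3)) =
      ∫ y in (1:ℝ)..q, 1 / Real.sqrt (Ω + (1 - Ω) * y ^ 3))
    (k₂ : ℝ) (hk₂ : 1 / k₂ = ∫ y in (1:ℝ)..(9/4), 1 / Real.sqrt (1 + y ^ 3)) :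
    Real.sqrt q ≤ k₂ / Real.sqrt (1 - Ω) ∧ q ≤ k₂ ^ 2 / (1 - Ω) := by
  have hΩ : 0 < 1 - Ω := by linarith
  have hk₂pos : 0 < k₂ :=
    one_div_pos.1 (hk₂ ▸ integral_one_div_sqrt_one_add_pow_three_pos (by norm_num))
  suffices h : √(1 - Ω) * √q ≤ k₂ by
    refine ⟨by rwa [le_div_iff₀ (sqrt_pos.2 hΩ), mul_comm], ?_⟩
    have := pow_le_pow_left₀ (by positivity) h 2
    rwa [mul_pow, sq_sqrt hΩ.le, sq_sqrt (by linarith), mul_comm, ← le_div_iff₀ hΩ] at this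
  rcases le_or_gt (9/4) q with hq | hq
  · have : 1 / k₂ ≤ 1 / (√(1 - Ω) * √q) := hk₂ ▸
      (integral_mono_interval le_rfl (by norm_num) hq
        (ae_of_all _ fun _ => by positivity)
        (intervalIntegrable_one_div_sqrt_one_add_pow_three zero_le_one (by linarith))).trans
      (integral_one_div_sqrt_one_add_pow_three_le_of_root hΩ0 hΩ1 hq1.le hroot)
    exact (one_div_le_one_div hk₂pos (by positivity)).1 this
  · have hk₂ge : 3 / 2 ≤ k₂ := by
      have := hk₂ ▸ integral_one_div_sqrt_one_add_pow_three_le_two_thirds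
      rw [div_le_iff₀ hk₂pos] at this
      linarith
    calc √(1 - Ω) * √q ≤ √q := mul_le_of_le_one_left (sqrt_nonneg _) (sqrt_le_one.2 (by linarith))
      _ ≤ 3 / 2 := by
        rw [sqrt_le_left (by norm_num)]
        linarith
      _ ≤ k₂ := hk₂ge
end
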